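/- Let m be a positive integer and let B : {1,...,m} × {1,...,m} → ℝ satisfy: B(k,l) ≥ 0 for all k, l, and B(k,l) ≤ B(k,l') whenever l ≤ l' (each row is nondecreasing). Define z_k = exp(B(k,k)) / (Σ_{l=1}^m exp(B(l,k))). Then Σ_{k=1}^m z_k ≤ ln(e·m) + max_{1≤k≤m} B(k,k). -/

import Mathlib

/-!
Since row `l` of `B` is nondecreasing, `B l k ≥ B l l` for `l ≤ k`, so the denominator of `z_k` is
at least the partial sum `S_k = ∑_{l ≤ k} a_l` of `a_l = exp (B l l)`. For `k > 0` the term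
`a_k / S_k` is at most `∫_{S_{k-1}}^{S_k} dx / x = log S_k - log S_{k-1}`, so `∑ a_k / S_k` telescopes
to at most `1 + log (S_m / a_0)`; finally `a_0 ≥ 1` and `S_m ≤ m · exp (max_k B k k)`.
-/

open Finset Real Fin.NatCast

theorem div_add_le_log_add_sub_log {s a : ℝ} (hs : 0 < s) (ha : 0 ≤ a) :
    a / (s + a) ≤ log (s + a) - log s := by
  have hsa : 0 < s + a := by linarith
  calc a / (s + a) = 1 - ((s + a) / s)⁻¹ := by field_simp; ring
    _ ≤ log ((s + a) / s) := one_sub_inv_le_log_of_pos (div_pos hsa hs)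
    _ = log (s + a) - log s := log_div hsa.ne' hs.ne'

theorem sum_div_partialSum_le_one_add_log (a : ℕ → ℝ) (ha : ∀ i, 0 < a i) (n : ℕ) :
    ∑ k ∈ range (n + 1), a k / ∑ i ∈ range (k + 1), a i
      ≤ 1 + log (∑ i ∈ range (n + 1), a i) - log (a 0) := by
  induction n with
  | zero => simp [(ha 0).ne']
  | succ n ih =>
    have hS : 0 < ∑ i ∈ range (n + 1), a i := sum_pos (fun i _ => ha i) nonempty_range_add_one
    have hstep := div_add_le_log_add_sub_log hS (ha (n + 1)).le
    rw [sum_range_succ _ (n + 1), sum_range_succ a (n + 1)]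
    linarith

theorem exp_div_sum_exp_le_exp_div_partialSum {n : ℕ} (B : Fin (n + 1) → Fin (n + 1) → ℝ)
    (hB : ∀ k, Monotone (B k)) (k : Fin (n + 1)) :
    exp (B k k) / ∑ l, exp (B l k) ≤ exp (B k k) / ∑ i ∈ range (k + 1), exp (B i i) := by
  have hpartial : ∑ i ∈ range (k + 1), exp (B i i) ≤ ∑ l, exp (B l k) := calc
    ∑ i ∈ range (k + 1), exp (B i i) ≤ ∑ i ∈ range (k + 1), exp (B i k) := by
      refine sum_le_sum fun i hi => exp_le_exp.2 (hB _ ?_)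
      rw [Fin.le_def, Fin.val_natCast]
      exact (Nat.mod_le _ _).trans (Nat.lt_succ_iff.1 (mem_range.1 hi))
    _ ≤ ∑ i ∈ range (n + 1), exp (B i k) :=
      sum_le_sum_of_subset_of_nonneg (range_subset_range.2 k.isLt) fun _ _ _ => (exp_pos _).le
    _ = ∑ l, exp (B l k) := by
      rw [← Fin.sum_univ_eq_sum_range (fun i => exp (B i k))]
      simp only [Fin.cast_val_eq_self]
  exact div_le_div_of_nonneg_left (exp_pos _).le
    (sum_pos (fun _ _ => exp_pos _) nonempty_range_add_one) hpartial

/-- Dual-variable sum bound: if `B k l ≥ 0` and each row `B k ·` is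
nondecreasing, then with `z_k = exp(B k k) / Σ_l exp(B l k)` we have
`Σ_k z_k ≤ ln(e·m) + max_k B k k`. -/
theorem stmt_8 (m : ℕ) (hm : 0 < m) (B : Fin m → Fin m → ℝ)
    (hB0 : ∀ k l, 0 ≤ B k l)
    (hBmono : ∀ k, Monotone (B k))
    (z : Fin m → ℝ)
    (hz : ∀ k, z k = Real.exp (B k k) / ∑ l : Fin m, Real.exp (B l k)) :
    ∑ k : Fin m, z k ≤
      Real.log (Real.exp 1 * m) +
        Finset.univ.sup' ⟨⟨0, hm⟩, Finset.mem_univ _⟩ (fun k => B k k) := by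
  obtain ⟨n, rfl⟩ : ∃ n, m = n + 1 := ⟨m - 1, by omega⟩
  set M := univ.sup' ⟨⟨0, hm⟩, mem_univ _⟩ fun k => B k k
  set a : ℕ → ℝ := fun i => exp (B i i)
  have hS : ∑ i ∈ range (n + 1), a i ≤ (n + 1) * exp M := by
    refine (sum_le_card_nsmul (range (n + 1)) a (exp M) fun i _ =>
      exp_le_exp.2 (le_sup' (fun k => B k k) (mem_univ _))).trans_eq ?_
    rw [card_range, nsmul_eq_mul, Nat.cast_succ]
  calc ∑ k, z k ≤ ∑ k ∈ range (n + 1), a k / ∑ i ∈ range (k + 1), a i := by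
        rw [← Fin.sum_univ_eq_sum_range (fun k => a k / ∑ i ∈ range (k + 1), a i)]
        refine sum_le_sum fun k _ => ?_
        simpa only [hz, a, Fin.cast_val_eq_self] using
          exp_div_sum_exp_le_exp_div_partialSum B hBmono k
    _ ≤ 1 + log (∑ i ∈ range (n + 1), a i) - log (a 0) :=
        sum_div_partialSum_le_one_add_log a (fun _ => exp_pos _) n
    _ ≤ 1 + log ((n + 1) * exp M) := by
        have ha0 : 0 ≤ log (a 0) := log_nonneg (one_le_exp (hB0 _ _))
        linarith [log_le_log (sum_pos (fun _ _ => exp_pos _) nonempty_range_add_one) hS]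
    _ = log (exp 1 * ↑(n + 1)) + M := by
        push_cast
        rw [log_mul (exp_ne_zero _) (by positivity), log_mul (by positivity) (exp_ne_zero _),
          log_exp, log_exp]
        ring
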